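/- arXiv:2503.03468 — 4 statements merged into one kernel-verified Lean document; each statement's English description precedes it below -/
import Mathlib

section
/- For 1 < σ ≤ 2 and any integer K ≥ 1, the partial sum of Grünwald coefficients is nonpositive: ∑_{m=0}^{K} z_m ≤ 0. -/
/-- Generalized binomial coefficient binom(x, m) = x(x-1)⋯(x-m+1)/m! for real x. -/
noncomputable def rbinom (x : ℝ) (m : ℕ) : ℝ :=
  (∏ i ∈ Finset.range m, (x - i)) / (Nat.factorial m)

/-- Grünwald coefficients z_m = (-1)^m · binom(σ, m). -/
noncomputable def gz (σ : ℝ) (m : ℕ) : ℝ := (-1) ^ m * rbinom σ m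

lemma rbinom_pascal (x : ℝ) (m : ℕ) :
    rbinom x (m + 1) = rbinom (x - 1) (m + 1) + rbinom (x - 1) m := by
  unfold rbinom
  have h1 : (∏ i ∈ Finset.range (m + 1), (x - i))
      = (∏ i ∈ Finset.range m, (x - 1 - i)) * x := by
    rw [Finset.prod_range_succ' (fun i => x - i)]
    simp only [Nat.cast_zero, sub_zero, Nat.cast_add, Nat.cast_one]
    congr 1
    exact Finset.prod_congr rfl (fun i _ => by ring)
  have h2 : (∏ i ∈ Finset.range (m + 1), (x - 1 - i))
      = (∏ i ∈ Finset.range m, (x - 1 - i)) * (x - 1 - m) := by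
    rw [Finset.prod_range_succ]
  rw [h1, h2]
  have hf : ((m + 1).factorial : ℝ) ≠ 0 := Nat.cast_ne_zero.mpr (Nat.factorial_ne_zero _)
  have hf' : (m.factorial : ℝ) ≠ 0 := Nat.cast_ne_zero.mpr (Nat.factorial_ne_zero _)
  have hfs : ((m + 1).factorial : ℝ) = (m + 1) * m.factorial := by
    rw [Nat.factorial_succ]; push_cast; ring
  rw [hfs]
  field_simp
  ring

lemma sum_gz (σ : ℝ) (K : ℕ) :
    ∑ m ∈ Finset.range (K + 1), gz σ m = (-1) ^ K * rbinom (σ - 1) K := by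
  induction K with
  | zero => simp [gz, rbinom]
  | succ n ih =>
      rw [Finset.sum_range_succ, ih, gz, rbinom_pascal]
      ring

theorem stmt_4 (σ : ℝ) (h1 : 1 < σ) (h2 : σ ≤ 2) (K : ℕ) (hK : 1 ≤ K) :
    ∑ m ∈ Finset.range (K + 1), gz σ m ≤ 0 := by
  rw [sum_gz]
  obtain ⟨K', rfl⟩ : ∃ K', K = K' + 1 := ⟨K - 1, (Nat.succ_pred_eq_of_pos hK).symm⟩
  unfold rbinom
  have hprod : (∏ i ∈ Finset.range (K' + 1), (σ - 1 - i))
      = (∏ i ∈ Finset.range K', (σ - 2 - i)) * (σ - 1) := by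
    rw [Finset.prod_range_succ' (fun i => σ - 1 - i)]
    simp only [Nat.cast_zero, sub_zero, Nat.cast_add, Nat.cast_one]
    congr 1
    exact Finset.prod_congr rfl (fun i _ => by ring)
  have hneg : (∏ i ∈ Finset.range K', (σ - 2 - i))
      = (-1) ^ K' * ∏ i ∈ Finset.range K', (2 + i - σ) := by
    have h : ∀ i ∈ Finset.range K', σ - 2 - (i : ℝ) = -1 * (2 + i - σ) := fun i _ => by ring
    rw [Finset.prod_congr rfl h, Finset.prod_mul_distrib, Finset.prod_const,
      Finset.card_range]
  have hnn : 0 ≤ ∏ i ∈ Finset.range K', (2 + (i : ℝ) - σ) :=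
    Finset.prod_nonneg fun i _ => by
      have : (0 : ℝ) ≤ i := Nat.cast_nonneg i
      linarith
  rw [hprod, hneg]
  have hm : (-1 : ℝ) ^ (K' + 1) * (-1 : ℝ) ^ K' = -1 := by
    rw [← pow_add]
    exact Odd.neg_one_pow ⟨K', by ring⟩
  have hF : (0 : ℝ) < ((K' + 1).factorial : ℝ) := by
    exact_mod_cast Nat.factorial_pos _
  have hd : 0 ≤ (∏ i ∈ Finset.range K', (2 + (i:ℝ) - σ)) * (σ - 1)
      / ((K' + 1).factorial : ℝ) :=
    div_nonneg (mul_nonneg hnn (by linarith)) hF.le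
  calc (-1 : ℝ) ^ (K' + 1) *
        ((-1) ^ K' * (∏ i ∈ Finset.range K', (2 + (i:ℝ) - σ)) * (σ - 1)
          / ((K' + 1).factorial : ℝ))
      = ((-1 : ℝ) ^ (K' + 1) * (-1) ^ K') *
        ((∏ i ∈ Finset.range K', (2 + (i:ℝ) - σ)) * (σ - 1)
          / ((K' + 1).factorial : ℝ)) := by ring
    _ ≤ 0 := by rw [hm]; linarith
end

section
/- For (√17 − 1)/2 ≤ σ ≤ 2 and every integer m ≥ 1, the shifted weighted average of Grünwald coefficients is nonnegative: (1 − σ/2)·z_m + (σ/2)·z_{m+1} ≥ 0. -/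
lemma gz_succ (σ : ℝ) (m : ℕ) : gz σ (m + 1) = gz σ m * ((m : ℝ) - σ) / (m + 1) := by
  have hf : ((Nat.factorial m : ℝ)) ≠ 0 := by
    exact_mod_cast Nat.factorial_ne_zero m
  have hm1 : ((m : ℝ) + 1) ≠ 0 := by positivity
  simp only [gz, rbinom, Finset.prod_range_succ, Nat.factorial_succ, pow_succ]
  push_cast
  field_simp
  ring

lemma gz_nonneg (σ : ℝ) (h1 : 1 ≤ σ) (h2 : σ ≤ 2) : ∀ m, 2 ≤ m → 0 ≤ gz σ m := by
  intro m hm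
  induction m, hm using Nat.le_induction with
  | base =>
    simp only [gz, rbinom, Finset.prod_range_succ, Finset.prod_range_zero]
    norm_num
    nlinarith
  | succ n hn ih =>
    rw [gz_succ]
    apply div_nonneg
    · apply mul_nonneg ih
      have : (2:ℝ) ≤ (n:ℝ) := by exact_mod_cast hn
      linarith
    · positivity

theorem stmt_9 (σ : ℝ) (h1 : (Real.sqrt 17 - 1) / 2 ≤ σ) (h2 : σ ≤ 2) :
    ∀ m : ℕ, 1 ≤ m → 0 ≤ (1 - σ / 2) * gz σ m + (σ / 2) * gz σ (m + 1) := by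
  have hs17 : Real.sqrt 17 ≥ 4 := by
    rw [show (4:ℝ) = Real.sqrt 16 by
      rw [show (16:ℝ) = 4^2 by norm_num, Real.sqrt_sq]; norm_num]
    exact Real.sqrt_le_sqrt (by norm_num)
  have hσ1 : (3:ℝ)/2 ≤ σ := by linarith
  have hsq : Real.sqrt 17 ^ 2 = 17 := Real.sq_sqrt (by norm_num)
  have hkey : 4 ≤ σ ^ 2 + σ := by
    have h17 : Real.sqrt 17 ≤ 2 * σ + 1 := by linarith
    nlinarith [Real.sqrt_nonneg (17:ℝ)]
  intro m hm
  rcases Nat.lt_or_ge m 2 with hm2 | hm2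
  · interval_cases m
    simp only [gz_succ, gz, rbinom, Finset.prod_range_succ, Finset.prod_range_zero]
    norm_num
    nlinarith [hσ1]
  · have hz : 0 ≤ gz σ m := gz_nonneg σ (by linarith) h2 m hm2
    have hmr : (2:ℝ) ≤ (m:ℝ) := by exact_mod_cast hm2
    have hm1 : (0:ℝ) < (m:ℝ) + 1 := by linarith
    rw [gz_succ]
    have heq : (1 - σ / 2) * gz σ m + σ / 2 * (gz σ m * ((m:ℝ) - σ) / ((m:ℝ) + 1))
        = gz σ m * (2 * ((m:ℝ) + 1) - σ - σ ^ 2) / (2 * ((m:ℝ) + 1)) := by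
      field_simp
      ring
    rw [heq]
    apply div_nonneg
    · apply mul_nonneg hz
      nlinarith
    · linarith
end

section
/- For 1 < σ ≤ 2, the partial sums T_K = ∑_{m=0}^{K} z_m of the Grünwald coefficients form a nondecreasing sequence for K ≥ 1 that converges to 0 as K → ∞. -/
lemma pascal (x : ℝ) (m : ℕ) :
    rbinom x (m+1) = rbinom (x-1) (m+1) + rbinom (x-1) m := by
  have hm : (Nat.factorial m : ℝ) ≠ 0 := Nat.cast_ne_zero.2 (Nat.factorial_ne_zero m)
  have h1 : ∏ i ∈ Finset.range (m+1), (x - i) = x * ∏ i ∈ Finset.range m, (x - 1 - i) := by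
    rw [Finset.prod_range_succ']
    have : ∀ i ∈ Finset.range m, (x - ↑(i+1)) = (x - 1 - i) := by
      intro i _; push_cast; ring
    rw [Finset.prod_congr rfl this]
    push_cast; ring
  have h2 : ∏ i ∈ Finset.range (m+1), (x - 1 - i)
      = (∏ i ∈ Finset.range m, (x - 1 - i)) * (x - 1 - m) := Finset.prod_range_succ _ _
  rw [rbinom, rbinom, rbinom, h1, h2, Nat.factorial_succ]
  push_cast
  field_simp
  ring

lemma sum_eq (σ : ℝ) (K : ℕ) :
    ∑ m ∈ Finset.range (K+1), gz σ m = (-1)^K * rbinom (σ-1) K := by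
  induction K with
  | zero => simp [gz, rbinom]
  | succ K ih =>
    rw [Finset.sum_range_succ, ih, gz, pascal]
    ring

lemma Tval (σ : ℝ) (K : ℕ) : (-1:ℝ)^(K+1) * rbinom (σ-1) (K+1)
    = -((σ-1) * (∏ i ∈ Finset.range K, ((i:ℝ)+2-σ)) / (Nat.factorial (K+1))) := by
  rw [rbinom, Finset.prod_range_succ']
  have h : ∏ i ∈ Finset.range K, (σ - 1 - (↑(i+1):ℝ))
      = (-1)^K * ∏ i ∈ Finset.range K, ((i:ℝ)+2-σ) := by
    rw [show ((-1:ℝ))^K = ∏ _i ∈ Finset.range K, (-1:ℝ) by simp,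
      ← Finset.prod_mul_distrib]
    apply Finset.prod_congr rfl
    intro i _; push_cast; ring
  rw [h]
  have hsq : ((-1:ℝ))^(K+1) * (-1)^K = -1 := by
    rw [← pow_add]
    exact Odd.neg_one_pow ⟨K, by ring⟩
  push_cast
  linear_combination ((∏ i ∈ Finset.range K, ((i:ℝ)+2-σ)) * (σ-1)
    / (Nat.factorial (K+1))) * hsq

theorem stmt_17 (σ : ℝ) (h1 : 1 < σ) (h2 : σ ≤ 2) :
    (∀ K : ℕ, 1 ≤ K →
        ∑ m ∈ Finset.range (K + 1), gz σ m ≤ ∑ m ∈ Finset.range (K + 2), gz σ m) ∧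
      Filter.Tendsto (fun K : ℕ => ∑ m ∈ Finset.range (K + 1), gz σ m)
        Filter.atTop (nhds 0) := by
  have hσ1 : (0:ℝ) ≤ σ - 1 := by linarith
  have hprod : ∀ K : ℕ, 0 ≤ ∏ i ∈ Finset.range K, ((i:ℝ)+2-σ) := by
    intro K
    apply Finset.prod_nonneg
    intro i _
    have : (0:ℝ) ≤ i := Nat.cast_nonneg i
    linarith
  have hprodle : ∀ K : ℕ, ∏ i ∈ Finset.range K, ((i:ℝ)+2-σ) ≤ (Nat.factorial K : ℝ) := by
    intro K
    have : (Nat.factorial K : ℝ) = ∏ i ∈ Finset.range K, ((i:ℝ)+1) := by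
      induction K with
      | zero => simp
      | succ K ih => rw [Finset.prod_range_succ, ← ih, Nat.factorial_succ]; push_cast; ring
    rw [this]
    apply Finset.prod_le_prod
    · intro i _
      have : (0:ℝ) ≤ i := Nat.cast_nonneg i
      linarith
    · intro i _; linarith
  constructor
  · intro K hK
    obtain ⟨K', rfl⟩ := Nat.exists_eq_add_of_le hK
    rw [show 1 + K' = K' + 1 by ring]
    rw [show K' + 1 + 2 = (K'+1) + 1 + 1 by ring]
    rw [sum_eq, sum_eq, Tval, Tval]
    rw [Finset.prod_range_succ, Nat.factorial_succ (K'+1)]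
    set P := ∏ i ∈ Finset.range K', ((i:ℝ)+2-σ) with hP
    have hp : 0 ≤ P := hprod K'
    have hf : (0:ℝ) < (Nat.factorial (K'+1) : ℝ) := by
      exact_mod_cast Nat.factorial_pos _
    push_cast
    rw [neg_le_neg_iff, div_le_div_iff₀ (by positivity) hf]
    have key : 0 ≤ (σ-1) * P * (Nat.factorial (K'+1) : ℝ) * σ := by positivity
    nlinarith [key]
  · apply tendsto_of_tendsto_of_tendsto_of_le_of_le'
      (g := fun K : ℕ => -((σ-1)/K)) (h := fun _ : ℕ => (0:ℝ))
    · have := (tendsto_const_div_atTop_nhds_zero_nat (σ-1)).neg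
      rwa [neg_zero] at this
    · exact tendsto_const_nhds
    · filter_upwards [Filter.eventually_ge_atTop 1] with K hK
      obtain ⟨K', rfl⟩ := Nat.exists_eq_add_of_le hK
      rw [show 1 + K' = K' + 1 by ring, sum_eq, Tval]
      set P := ∏ i ∈ Finset.range K', ((i:ℝ)+2-σ) with hP
      have hp : 0 ≤ P := hprod K'
      have hple : P ≤ (Nat.factorial K' : ℝ) := hprodle K'
      have hf : (0:ℝ) < (Nat.factorial (K'+1) : ℝ) := by
        exact_mod_cast Nat.factorial_pos _
      rw [neg_le_neg_iff, Nat.factorial_succ K']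
      push_cast
      rw [div_le_div_iff₀ (by positivity) (by positivity)]
      have hf' : (0:ℝ) < (Nat.factorial K' : ℝ) := by exact_mod_cast Nat.factorial_pos _
      nlinarith [mul_nonneg hσ1 (sub_nonneg.2 hple), hf'.le]
    · filter_upwards [Filter.eventually_ge_atTop 1] with K hK
      obtain ⟨K', rfl⟩ := Nat.exists_eq_add_of_le hK
      rw [show 1 + K' = K' + 1 by ring, sum_eq, Tval]
      have hp : 0 ≤ ∏ i ∈ Finset.range K', ((i:ℝ)+2-σ) := hprod K'
      have hf : (0:ℝ) < (Nat.factorial (K'+1) : ℝ) := by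
        exact_mod_cast Nat.factorial_pos _
      have : 0 ≤ (σ-1) * (∏ i ∈ Finset.range K', ((i:ℝ)+2-σ)) / (Nat.factorial (K'+1) : ℝ) := by
        positivity
      linarith
end

section
/- For (√17 − 1)/2 ≤ σ ≤ 2 and integers k > j with k − j ≥ 1, the quantity (σ/2)·z_{k−j+1} + (1 − σ/2)·z_{k−j} is nonnegative, and it is strictly positive when k − j ≥ 2 and σ < 2. -/
lemma gz_two (σ : ℝ) : gz σ 2 = σ * (σ - 1) / 2 := by
  simp [gz, rbinom, Finset.prod_range_succ, Nat.factorial]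

lemma gz_one (σ : ℝ) : gz σ 1 = -σ := by
  simp [gz, rbinom, Nat.factorial]

lemma gz_nonneg_s19 (σ : ℝ) (hσ1 : 1 ≤ σ) (hσ2 : σ ≤ 2) :
    ∀ n, 2 ≤ n → 0 ≤ gz σ n := by
  intro n hn
  induction n with
  | zero => omega
  | succ m ih =>
    rcases Nat.lt_or_ge m 2 with hm | hm
    · interval_cases m
      · omega
      · rw [gz_two]; nlinarith
    · have h0 : 0 ≤ gz σ m := ih hm
      rw [gz_succ]
      have hms : (0:ℝ) ≤ (m : ℝ) - σ := by
        have : (2:ℝ) ≤ (m:ℝ) := by exact_mod_cast hm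
        linarith
      positivity

lemma gz_pos (σ : ℝ) (hσ1 : 1 < σ) (hσ2 : σ < 2) :
    ∀ n, 2 ≤ n → 0 < gz σ n := by
  intro n hn
  induction n with
  | zero => omega
  | succ m ih =>
    rcases Nat.lt_or_ge m 2 with hm | hm
    · interval_cases m
      · omega
      · rw [gz_two]; nlinarith
    · have h0 : 0 < gz σ m := ih hm
      rw [gz_succ]
      have hms : (0:ℝ) < (m : ℝ) - σ := by
        have : (2:ℝ) ≤ (m:ℝ) := by exact_mod_cast hm
        linarith
      positivity

theorem stmt_19 (σ : ℝ) (h1 : (Real.sqrt 17 - 1) / 2 ≤ σ) (h2 : σ ≤ 2)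
    (k j : ℕ) (hkj : j < k) :
    0 ≤ (σ / 2) * gz σ (k - j + 1) + (1 - σ / 2) * gz σ (k - j) ∧
      (2 ≤ k - j → σ < 2 →
        0 < (σ / 2) * gz σ (k - j + 1) + (1 - σ / 2) * gz σ (k - j)) := by
  have hs : Real.sqrt 17 ^ 2 = 17 := Real.sq_sqrt (by norm_num)
  have hs0 : 0 ≤ Real.sqrt 17 := Real.sqrt_nonneg 17
  have hσ1 : 1 < σ := by nlinarith
  have hkey : 4 ≤ σ ^ 2 + σ := by nlinarith
  set n := k - j with hn
  have hn1 : 1 ≤ n := by omega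
  rcases Nat.lt_or_ge n 2 with h | h
  · have hn' : n = 1 := by omega
    rw [hn']
    constructor
    · rw [gz_two, gz_one]; nlinarith
    · intro habs; omega
  · have hge2 : 2 ≤ n + 1 := by omega
    constructor
    · have h3 := gz_nonneg_s19 σ hσ1.le h2 n h
      have h4 := gz_nonneg_s19 σ hσ1.le h2 (n + 1) hge2
      have : 0 ≤ 1 - σ / 2 := by linarith
      have : 0 ≤ σ / 2 := by linarith
      positivity
    · intro _ hσ2
      have h3 := gz_pos σ hσ1 hσ2 n h
      have h4 := gz_nonneg_s19 σ hσ1.le h2 (n + 1) hge2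
      have hp : 0 < (1 - σ / 2) * gz σ n := by
        apply mul_pos (by linarith) h3
      have hq : 0 ≤ (σ / 2) * gz σ (n + 1) := by
        apply mul_nonneg (by linarith) h4
      linarith
end
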